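/- If t > 1 (i.e. the number of indeterminates is at least 2), then the set DCO(M) = DO(M) ∩ CO(M) of degree-compatible orderings is nowhere dense in DO(M) (with its subspace topology); equivalently, the closure of DCO(M) in DO(M) has empty interior in DO(M). -/

import Mathlib

/-- A binary relation is a total ordering: antisymmetric, transitive, and total. -/
def IsTotalOrdering {S : Type*} (r : S → S → Prop) : Prop :=
  (∀ a b, r a b → r b a → a = b) ∧ (∀ a b c, r a b → r b c → r a c) ∧ (∀ a b, r a b ∨ r b a)

/-- The set `TO(S)` of all total orderings on `S`. -/
def TO (S : Type*) : Type _ := {r : S → S → Prop // IsTotalOrdering r}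

/-- The topology `𝒰(S)` on `TO(S)`, generated by the subbasis of all sets
`U_{(a,b)} = {≤ ∈ TO(S) : a ≤ b}`. -/
instance TOTopology (S : Type*) : TopologicalSpace (TO S) :=
  TopologicalSpace.generateFrom {U | ∃ a b : S, U = {r : TO S | r.1 a b}}
/-- Monomials of `K[X_1,…,X_t]`, identified with their exponent vectors `ν ∈ ℕ^t`. -/
abbrev Mon (t : ℕ) := Fin t →₀ ℕ

/-- `LM` is a leading-monomial function: for each total ordering `r` on monomials and each
nonzero polynomial `p`, `LM r p` is the `r`-maximal element of the support of `p`. -/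
def IsLM (K : Type*) [Field K] (t : ℕ)
    (LM : TO (Mon t) → MvPolynomial (Fin t) K → Mon t) : Prop :=
  ∀ (r : TO (Mon t)) (p : MvPolynomial (Fin t) K), p ≠ 0 →
    LM r p ∈ p.support ∧ ∀ m ∈ p.support, r.1 m (LM r p)

/-- The leading monomial ideal `LM_≤(E)` of a subset `E ⊆ K[X]`: the ideal generated by the
leading monomials of the nonzero elements of `E`. -/
noncomputable def LMideal (K : Type*) [Field K] (t : ℕ)
    (LM : TO (Mon t) → MvPolynomial (Fin t) K → Mon t)
    (r : TO (Mon t)) (E : Set (MvPolynomial (Fin t) K)) : Ideal (MvPolynomial (Fin t) K) :=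
  Ideal.span {q | ∃ e ∈ E, e ≠ 0 ∧ q = MvPolynomial.monomial (LM r e) (1 : K)}

/-- `DO(M)`: the set of degree orderings on the monomials of `K[X]`, i.e. total orderings `≤`
with `deg(LM_≤(p)) = deg(p)` for every nonzero polynomial `p`. -/
def DOset (K : Type*) [Field K] (t : ℕ)
    (LM : TO (Mon t) → MvPolynomial (Fin t) K → Mon t) : Set (TO (Mon t)) :=
  {r | ∀ p : MvPolynomial (Fin t) K, p ≠ 0 →
    ((LM r p).sum fun _ e => e) = p.totalDegree}

/-- `CO(M)`: the set of compatible (semigroup) orderings on the monomials of `K[X]`, i.e.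
total orderings `≤` with `X^υ ≤ X^ν → X^{υ+γ} ≤ X^{ν+γ}` for all exponent vectors. -/
def COset (t : ℕ) : Set (TO (Mon t)) :=
  {r | ∀ υ ν γ : Mon t, r.1 υ ν → r.1 (υ + γ) (ν + γ)}

/-!
A degree ordering is the same as a total ordering that refines the total degree, while an open
neighbourhood of an ordering `r` only constrains `r` on finitely many monomials, hence only
below some degree `d`. Take two distinct monomials `u, v` of degree `d` with `u ≤ v` (this needs
two variables) and let `r'` be `r` with `u + u` and `v + u` interchanged. Then `r'` is again a
degree ordering in the same neighbourhood, and if both `r` and `r'` were compatible, `u ≤ v`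
would give `u + u ≤ v + u` in both, i.e. `u + u = v + u`.
-/

namespace TO

variable {S : Type*}

lemma refl (r : TO S) (a : S) : r.1 a a :=
  (r.2.2.2 a a).elim id id

lemma not_rel_iff {r : TO S} {a b : S} (hab : a ≠ b) : ¬ r.1 a b ↔ r.1 b a :=
  ⟨(r.2.2.2 a b).resolve_left, fun hba hab' => hab (r.2.1 a b hab' hba)⟩

lemma isOpen_setOf_rel (a b : S) : IsOpen {r : TO S | r.1 a b} :=
  TopologicalSpace.isOpen_generateFrom_of_mem ⟨a, b, rfl⟩

lemma isClosed_setOf_rel (a b : S) : IsClosed {r : TO S | r.1 a b} := by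
  by_cases hab : a = b
  · subst hab
    simp only [refl, Set.ofPred_true, isClosed_univ]
  · rw [← isOpen_compl_iff, Set.compl_ofPred]
    simpa only [not_rel_iff hab] using isOpen_setOf_rel b a

lemma exists_finset_of_mem_isOpen {O : Set (TO S)} (hO : IsOpen O) {r : TO S} (hr : r ∈ O) :
    ∃ s : Finset S, ∀ r' : TO S, (∀ a ∈ s, ∀ b ∈ s, r.1 a b → r'.1 a b) → r' ∈ O := by
  classical
  induction hO generalizing r with
  | basic U hU =>
    obtain ⟨a, b, rfl⟩ := hU
    exact ⟨{a, b}, fun r' h => h a (by simp) b (by simp) hr⟩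
  | univ => exact ⟨∅, fun _ _ => trivial⟩
  | inter U V _ _ ihU ihV =>
    obtain ⟨s, hs⟩ := ihU hr.1
    obtain ⟨s', hs'⟩ := ihV hr.2
    refine ⟨s ∪ s', fun r' h => ⟨hs r' fun a ha b hb => ?_, hs' r' fun a ha b hb => ?_⟩⟩
    · exact h a (Finset.mem_union_left _ ha) b (Finset.mem_union_left _ hb)
    · exact h a (Finset.mem_union_right _ ha) b (Finset.mem_union_right _ hb)
  | sUnion F _ ih =>
    obtain ⟨U, hUF, hrU⟩ := hr
    obtain ⟨s, hs⟩ := ih U hUF hrU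
    exact ⟨s, fun r' h => ⟨U, hUF, hs r' h⟩⟩

def comap {T : Type*} (f : T → S) (hf : Function.Injective f) (r : TO S) : TO T :=
  ⟨fun a b => r.1 (f a) (f b), fun _ _ hab hba => hf (r.2.1 _ _ hab hba),
    fun _ _ _ => r.2.2.1 _ _ _, fun _ _ => r.2.2.2 _ _⟩

end TO

lemma isNowhereDense_subtype_of_isClosed {X : Type*} [TopologicalSpace X] {D C : Set X}
    (hC : IsClosed C) (h : ∀ O, IsOpen O → (O ∩ D).Nonempty → ¬ O ∩ D ⊆ C) :
    IsNowhereDense {x : D | ↑x ∈ C} := by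
  have hA : IsClosed {x : D | ↑x ∈ C} := hC.preimage continuous_subtype_val
  rw [hA.isNowhereDense_iff, Set.eq_empty_iff_forall_notMem]
  intro x hx
  obtain ⟨O, hO, hOA⟩ := isOpen_induced_iff.1 (isOpen_interior (s := {x : D | ↑x ∈ C}))
  rw [← hOA] at hx
  refine h O hO ⟨x, hx, x.2⟩ fun y ⟨hyO, hyD⟩ => ?_
  have hy : (⟨y, hyD⟩ : D) ∈ interior {x : D | ↑x ∈ C} := by
    rw [← hOA]
    exact hyO
  exact interior_subset (s := {x : D | ↑x ∈ C}) hy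

lemma isClosed_COset (t : ℕ) : IsClosed (COset t) := by
  simp only [COset, Set.ofPred_forall]
  exact isClosed_iInter fun υ => isClosed_iInter fun ν => isClosed_iInter fun γ =>
    isClosed_imp (TO.isOpen_setOf_rel υ ν) (TO.isClosed_setOf_rel _ _)

section Monomials

variable {t : ℕ}

def RefinesDegree (r : TO (Mon t)) : Prop :=
  ∀ m m' : Mon t, m.degree < m'.degree → r.1 m m'

lemma RefinesDegree.comap {r : TO (Mon t)} (hr : RefinesDegree r) {f : Mon t → Mon t}
    (hf : Function.Injective f) (hdeg : ∀ m, (f m).degree = m.degree) :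
    RefinesDegree (r.comap f hf) := fun m m' h =>
  hr (f m) (f m') (by rwa [hdeg, hdeg])

variable {K : Type*} [Field K] {LM : TO (Mon t) → MvPolynomial (Fin t) K → Mon t}

lemma RefinesDegree.of_mem_DOset (hLM : IsLM K t LM) {r : TO (Mon t)} (hr : r ∈ DOset K t LM) :
    RefinesDegree r := by
  classical
  intro m m' hlt
  set p : MvPolynomial (Fin t) K := MvPolynomial.monomial m 1 + MvPolynomial.monomial m' 1
  have hsupp : p.support = {m, m'} :=
    Finsupp.support_single_add_single (ne_of_apply_ne _ hlt.ne) one_ne_zero one_ne_zero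
  have hp : p ≠ 0 := MvPolynomial.support_nonempty.1 (hsupp ▸ Finset.insert_nonempty _ _)
  obtain ⟨hmem, hmax⟩ := hLM r p hp
  have hdeg : (LM r p).degree = p.totalDegree := hr p hp
  have hm' : m'.degree ≤ p.totalDegree := MvPolynomial.le_totalDegree (by simp [hsupp])
  rw [hsupp, Finset.mem_insert, Finset.mem_singleton] at hmem
  rcases hmem with h | h
  · rw [h] at hdeg
    omega
  · exact h ▸ hmax m (by simp [hsupp])

lemma RefinesDegree.mem_DOset (hLM : IsLM K t LM) {r : TO (Mon t)} (hr : RefinesDegree r) :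
    r ∈ DOset K t LM := fun p hp => by
  obtain ⟨hmem, hmax⟩ := hLM r p hp
  refine le_antisymm (MvPolynomial.le_totalDegree hmem)
    (Finset.sup_le fun b hb => not_lt.1 fun hlt => hlt.ne ?_)
  exact congrArg Finsupp.degree (r.2.1 _ _ (hr _ _ hlt) (hmax b hb))

lemma DOset_eq_setOf_refinesDegree (hLM : IsLM K t LM) : DOset K t LM = {r | RefinesDegree r} :=
  Set.ext fun _ => ⟨RefinesDegree.of_mem_DOset hLM, RefinesDegree.mem_DOset hLM⟩

lemma exists_ne_degree_eq (ht : 1 < t) {d : ℕ} (hd : d ≠ 0) :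
    ∃ u v : Mon t, u ≠ v ∧ u.degree = d ∧ v.degree = d := by
  refine ⟨Finsupp.single ⟨0, by omega⟩ d, Finsupp.single ⟨1, ht⟩ d, ?_, by simp, by simp⟩
  rw [Ne, Finsupp.single_left_inj hd]
  simp

lemma not_subset_COset_of_isOpen (ht : 1 < t) {O : Set (TO (Mon t))} (hO : IsOpen O)
    {r : TO (Mon t)} (hrO : r ∈ O) (hr : RefinesDegree r) :
    ¬ O ∩ {r | RefinesDegree r} ⊆ COset t := by
  intro hsub
  obtain ⟨s, hs⟩ := TO.exists_finset_of_mem_isOpen hO hrO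
  obtain ⟨d, hd, hs_deg⟩ : ∃ d, 0 < d ∧ ∀ m ∈ s, m.degree < d :=
    ⟨s.sup Finsupp.degree + 1, Nat.succ_pos _, fun m hm => Nat.lt_succ_of_le (Finset.le_sup hm)⟩
  obtain ⟨u, v, huv, hu, hv, hr_uv⟩ :
      ∃ u v : Mon t, u ≠ v ∧ u.degree = d ∧ v.degree = d ∧ r.1 u v := by
    obtain ⟨u, v, huv, hu, hv⟩ := exists_ne_degree_eq ht hd.ne'
    rcases r.2.2.2 u v with h | h
    exacts [⟨u, v, huv, hu, hv, h⟩, ⟨v, u, huv.symm, hv, hu, h⟩]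
  have huu : (u + u).degree = d + d := by rw [map_add, hu]
  have hvu : (v + u).degree = d + d := by rw [map_add, hu, hv]
  set e := Equiv.swap (u + u) (v + u)
  have he_fix : ∀ m : Mon t, m.degree < d + d → e m = m := fun m hm =>
    Equiv.swap_apply_of_ne_of_ne (by rintro rfl; omega) (by rintro rfl; omega)
  set r' := r.comap e e.injective
  have hr' : RefinesDegree r' :=
    hr.comap e.injective (Equiv.apply_swap_eq_self (v := Finsupp.degree) (huu.trans hvu.symm))
  have hr'O : r' ∈ O := hs r' fun a ha b hb hab => show r.1 (e a) (e b) by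
    rwa [he_fix a (by linarith [hs_deg a ha]), he_fix b (by linarith [hs_deg b hb])]
  have hr_co : r.1 (u + u) (v + u) := hsub ⟨hrO, hr⟩ u v u hr_uv
  have hr'_co : r.1 (e (u + u)) (e (v + u)) := hsub ⟨hr'O, hr'⟩ u v u
    (show r.1 (e u) (e v) by rwa [he_fix u (by omega), he_fix v (by omega)])
  rw [Equiv.swap_apply_left, Equiv.swap_apply_right] at hr'_co
  exact huv (add_right_cancel (r.2.1 _ _ hr_co hr'_co))

end Monomials

/-- If the number of indeterminates is at least `2`, then the set `DCO(M) = DO(M) ∩ CO(M)` of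
degree-compatible orderings is nowhere dense in `DO(M)` (with its subspace topology). -/
theorem DCO_nowhereDense_in_DO (K : Type*) [Field K] (t : ℕ) (ht : 1 < t)
    (LM : TO (Mon t) → MvPolynomial (Fin t) K → Mon t) (hLM : IsLM K t LM) :
    IsNowhereDense {x : ↥(DOset K t LM) | (x : TO (Mon t)) ∈ COset t} := by
  rw [DOset_eq_setOf_refinesDegree hLM]
  exact isNowhereDense_subtype_of_isClosed (isClosed_COset t) fun O hO ⟨_, hrO, hr⟩ =>
    not_subset_COset_of_isOpen ht hO hrO hr
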